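/- arXiv:2508.13012 — 6 statements merged into one kernel-verified Lean document; each statement's English description precedes it below -/
import Mathlib

section
/- Let c = z_{1−α/2} > 0, y₁, y₂ ∈ ℝ, B > 0, λ ≥ 0, and let ϖ(θ₂) be defined piecewise as 1 − F([λ(y₁−θ₂)+(1+λ)(y₂−θ₂) − λB]²/(λ²+(1+λ)²); 1, 0) when θ₂ ≤ (λy₁+(1+λ)y₂−λB)/(1+2λ), as 1 − F([λ(y₁−θ₂)+(1+λ)(y₂−θ₂) + λB]²/(λ²+(1+λ)²); 1, 0) when θ₂ ≥ (λy₁+(1+λ)y₂+λB)/(1+2λ), and 1 otherwise. Then the α-cut {θ₂ : ϖ(θ₂) > α} equals the interval ((λy₁+(1+λ)y₂−λB−c√(λ²+(1+λ)²))/(1+2λ), (λy₁+(1+λ)y₂+λB+c√(λ²+(1+λ)²))/(1+2λ)). -/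
open MeasureTheory

/-- The standard normal CDF. -/
noncomputable def stdNormalCDF (x : ℝ) : ℝ :=
  ∫ t in Set.Iic x, (Real.sqrt (2 * Real.pi))⁻¹ * Real.exp (-t ^ 2 / 2)

lemma gauss_eq : (fun t : ℝ => (Real.sqrt (2 * Real.pi))⁻¹ * Real.exp (-t ^ 2 / 2))
    = fun t : ℝ => (Real.sqrt (2 * Real.pi))⁻¹ * Real.exp (-(1/2 : ℝ) * t ^ 2) := by
  funext t; ring_nf

lemma gauss_integrable :
    Integrable (fun t : ℝ => (Real.sqrt (2 * Real.pi))⁻¹ * Real.exp (-t ^ 2 / 2)) := by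
  rw [gauss_eq]
  exact (integrable_exp_neg_mul_sq (by norm_num)).const_mul _

lemma gauss_pos (t : ℝ) : 0 < (Real.sqrt (2 * Real.pi))⁻¹ * Real.exp (-t ^ 2 / 2) := by
  have : 0 < Real.sqrt (2 * Real.pi) := Real.sqrt_pos.2 (by positivity)
  positivity

lemma gauss_total :
    ∫ t : ℝ, (Real.sqrt (2 * Real.pi))⁻¹ * Real.exp (-t ^ 2 / 2) = 1 := by
  rw [gauss_eq, integral_const_mul, integral_gaussian]
  have h2 : Real.pi / (1/2 : ℝ) = 2 * Real.pi := by ring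
  rw [h2, inv_mul_cancel₀]
  exact ne_of_gt (Real.sqrt_pos.2 (by positivity))

lemma stdNormalCDF_neg (x : ℝ) : stdNormalCDF (-x) = 1 - stdNormalCDF x := by
  have h1 : stdNormalCDF (-x)
      = ∫ t in Set.Ioi x, (Real.sqrt (2 * Real.pi))⁻¹ * Real.exp (-t ^ 2 / 2) := by
    rw [stdNormalCDF, ← integral_comp_neg_Ioi]
    congr 1; funext t; rw [neg_pow]; ring_nf
  have h2 := intervalIntegral.integral_Iic_add_Ioi (b := x) gauss_integrable.integrableOn
    gauss_integrable.integrableOn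
  rw [gauss_total] at h2
  rw [h1, ← h2, stdNormalCDF]; ring

lemma stdNormalCDF_strictMono : StrictMono stdNormalCDF := by
  intro a b hab
  have h1 : (∫ t in Set.Iic b, (Real.sqrt (2 * Real.pi))⁻¹ * Real.exp (-t ^ 2 / 2))
      - ∫ t in Set.Iic a, (Real.sqrt (2 * Real.pi))⁻¹ * Real.exp (-t ^ 2 / 2)
      = ∫ t in a..b, (Real.sqrt (2 * Real.pi))⁻¹ * Real.exp (-t ^ 2 / 2) :=
    intervalIntegral.integral_Iic_sub_Iic gauss_integrable.integrableOn
      gauss_integrable.integrableOn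
  have h2 : 0 < ∫ t in a..b, (Real.sqrt (2 * Real.pi))⁻¹ * Real.exp (-t ^ 2 / 2) :=
    intervalIntegral.intervalIntegral_pos_of_pos
      gauss_integrable.intervalIntegrable gauss_pos hab
  have ha : stdNormalCDF a = ∫ t in Set.Iic a, (Real.sqrt (2 * Real.pi))⁻¹ * Real.exp (-t ^ 2 / 2) := rfl
  have hb : stdNormalCDF b = ∫ t in Set.Iic b, (Real.sqrt (2 * Real.pi))⁻¹ * Real.exp (-t ^ 2 / 2) := rfl
  rw [ha, hb]
  linarith [h1, h2]

lemma key_iff {α c : ℝ} (hc : stdNormalCDF c = 1 - α / 2) (x : ℝ) :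
    stdNormalCDF x - stdNormalCDF (-x) < 1 - α ↔ x < c := by
  rw [stdNormalCDF_neg]
  constructor
  · intro h
    have : stdNormalCDF x < stdNormalCDF c := by rw [hc]; linarith
    exact stdNormalCDF_strictMono.lt_iff_lt.mp this
  · intro h
    have := stdNormalCDF_strictMono h
    rw [hc] at this; linarith

/-- The α-cut of the partial-conditioning marginal contour (14) equals the interval
with endpoints (λy₁+(1+λ)y₂ ∓ (λB + c√(λ²+(1+λ)²)))/(1+2λ), where c = z_{1−α/2}. -/
theorem stmt_6 (y₁ y₂ B lam α c : ℝ) (hα : 0 < α) (hα1 : α < 1)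
    (hB : 0 < B) (hlam : 0 ≤ lam)
    (hc : stdNormalCDF c = 1 - α / 2) (hcpos : 0 < c)
    (F : ℝ → ℝ)
    (hF : ∀ t, 0 ≤ t → F t = stdNormalCDF (Real.sqrt t) - stdNormalCDF (-Real.sqrt t))
    (ϖ : ℝ → ℝ)
    (hϖ : ∀ θ₂, ϖ θ₂ =
      if θ₂ ≤ (lam * y₁ + (1 + lam) * y₂ - lam * B) / (1 + 2 * lam) then
        1 - F ((lam * (y₁ - θ₂) + (1 + lam) * (y₂ - θ₂) - lam * B) ^ 2 /
          (lam ^ 2 + (1 + lam) ^ 2))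
      else if (lam * y₁ + (1 + lam) * y₂ + lam * B) / (1 + 2 * lam) ≤ θ₂ then
        1 - F ((lam * (y₁ - θ₂) + (1 + lam) * (y₂ - θ₂) + lam * B) ^ 2 /
          (lam ^ 2 + (1 + lam) ^ 2))
      else 1) :
    {θ₂ : ℝ | ϖ θ₂ > α} =
      Set.Ioo
        ((lam * y₁ + (1 + lam) * y₂ - lam * B - c * Real.sqrt (lam ^ 2 + (1 + lam) ^ 2)) /
          (1 + 2 * lam))
        ((lam * y₁ + (1 + lam) * y₂ + lam * B + c * Real.sqrt (lam ^ 2 + (1 + lam) ^ 2)) /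
          (1 + 2 * lam)) := by
  have hd : (0:ℝ) < 1 + 2 * lam := by linarith
  have hS : (0:ℝ) < lam ^ 2 + (1 + lam) ^ 2 := by positivity
  have hs : 0 < Real.sqrt (lam ^ 2 + (1 + lam) ^ 2) := Real.sqrt_pos.2 hS
  set s := Real.sqrt (lam ^ 2 + (1 + lam) ^ 2) with hs_def
  have hcs : 0 < c * s := mul_pos hcpos hs
  have hlB : 0 ≤ lam * B := mul_nonneg hlam hB.le
  ext θ₂
  simp only [Set.mem_setOf_eq, Set.mem_Ioo, gt_iff_lt, hϖ θ₂]
  by_cases h1 : θ₂ ≤ (lam * y₁ + (1 + lam) * y₂ - lam * B) / (1 + 2 * lam)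
  · rw [if_pos h1]
    have h1' : θ₂ * (1 + 2 * lam) ≤ lam * y₁ + (1 + lam) * y₂ - lam * B :=
      (le_div_iff₀ hd).mp h1
    have hg : 0 ≤ lam * (y₁ - θ₂) + (1 + lam) * (y₂ - θ₂) - lam * B := by linarith
    have ht : 0 ≤ (lam * (y₁ - θ₂) + (1 + lam) * (y₂ - θ₂) - lam * B) ^ 2 /
        (lam ^ 2 + (1 + lam) ^ 2) := by positivity
    rw [hF _ ht]
    have hsqrt : Real.sqrt ((lam * (y₁ - θ₂) + (1 + lam) * (y₂ - θ₂) - lam * B) ^ 2 /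
        (lam ^ 2 + (1 + lam) ^ 2))
        = (lam * (y₁ - θ₂) + (1 + lam) * (y₂ - θ₂) - lam * B) / s := by
      rw [Real.sqrt_div (by positivity), Real.sqrt_sq hg]
    rw [hsqrt]
    have hkey := key_iff hc ((lam * (y₁ - θ₂) + (1 + lam) * (y₂ - θ₂) - lam * B) / s)
    constructor
    · intro h
      have hx : (lam * (y₁ - θ₂) + (1 + lam) * (y₂ - θ₂) - lam * B) / s < c :=
        hkey.mp (by linarith)
      have hgc : lam * (y₁ - θ₂) + (1 + lam) * (y₂ - θ₂) - lam * B < c * s :=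
        (div_lt_iff₀ hs).mp hx
      constructor
      · rw [div_lt_iff₀ hd]; linarith
      · rw [lt_div_iff₀ hd]; linarith
    · rintro ⟨hl, hr⟩
      rw [div_lt_iff₀ hd] at hl
      have hgc : lam * (y₁ - θ₂) + (1 + lam) * (y₂ - θ₂) - lam * B < c * s := by linarith
      have := hkey.mpr ((div_lt_iff₀ hs).mpr hgc)
      linarith
  · rw [if_neg h1]
    push_neg at h1
    have h1' : lam * y₁ + (1 + lam) * y₂ - lam * B < θ₂ * (1 + 2 * lam) :=
      (div_lt_iff₀ hd).mp h1
    by_cases h2 : (lam * y₁ + (1 + lam) * y₂ + lam * B) / (1 + 2 * lam) ≤ θ₂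
    · rw [if_pos h2]
      have h2' : lam * y₁ + (1 + lam) * y₂ + lam * B ≤ θ₂ * (1 + 2 * lam) :=
        (div_le_iff₀ hd).mp h2
      have hg : lam * (y₁ - θ₂) + (1 + lam) * (y₂ - θ₂) + lam * B ≤ 0 := by linarith
      have ht : 0 ≤ (lam * (y₁ - θ₂) + (1 + lam) * (y₂ - θ₂) + lam * B) ^ 2 /
          (lam ^ 2 + (1 + lam) ^ 2) := by positivity
      rw [hF _ ht]
      have hsqrt : Real.sqrt ((lam * (y₁ - θ₂) + (1 + lam) * (y₂ - θ₂) + lam * B) ^ 2 /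
          (lam ^ 2 + (1 + lam) ^ 2))
          = -(lam * (y₁ - θ₂) + (1 + lam) * (y₂ - θ₂) + lam * B) / s := by
        rw [Real.sqrt_div (by positivity), Real.sqrt_sq_eq_abs, abs_of_nonpos hg]
      rw [hsqrt]
      have hkey := key_iff hc (-(lam * (y₁ - θ₂) + (1 + lam) * (y₂ - θ₂) + lam * B) / s)
      constructor
      · intro h
        have hx : -(lam * (y₁ - θ₂) + (1 + lam) * (y₂ - θ₂) + lam * B) / s < c :=
          hkey.mp (by linarith)
        have hgc : -(lam * (y₁ - θ₂) + (1 + lam) * (y₂ - θ₂) + lam * B) < c * s :=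
          (div_lt_iff₀ hs).mp hx
        constructor
        · rw [div_lt_iff₀ hd]; linarith
        · rw [lt_div_iff₀ hd]; linarith
      · rintro ⟨hl, hr⟩
        rw [lt_div_iff₀ hd] at hr
        have hgc : -(lam * (y₁ - θ₂) + (1 + lam) * (y₂ - θ₂) + lam * B) < c * s := by
          linarith
        have := hkey.mpr ((div_lt_iff₀ hs).mpr hgc)
        linarith
    · rw [if_neg h2]
      push_neg at h2
      have h2' : θ₂ * (1 + 2 * lam) < lam * y₁ + (1 + lam) * y₂ + lam * B :=
        (lt_div_iff₀ hd).mp h2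
      constructor
      · intro _
        constructor
        · rw [div_lt_iff₀ hd]; linarith
        · rw [lt_div_iff₀ hd]; linarith
      · intro _; linarith
end

section
/- For fixed α ∈ (0,1) and B > 0, the function L₁(λ) = (2/(1+2λ))·[λB + z_{1−α/2}·√(λ² + (1+λ)²)] on λ ∈ [0,∞) attains its infimum at λ* = ((−B + √(2z²_{1−α/2} − B²))/(2B))·𝟙{B ≤ z_{1−α/2}}; in particular, if B > z_{1−α/2} the minimizer is λ* = 0. -/
open MeasureTheory

set_option maxHeartbeats 1000000 in
/-- The CI length L₁(λ) attains its infimum over λ ∈ [0,∞) at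
λ* = (−B + √(2c² − B²))/(2B)·𝟙{B ≤ c}, where c = z_{1−α/2}; in particular, when
B > c the minimizer is λ* = 0. -/
theorem stmt_8 (α B c : ℝ) (hα : 0 < α) (hα1 : α < 1) (hB : 0 < B)
    (hc : stdNormalCDF c = 1 - α / 2) (hcpos : 0 < c)
    (L₁ : ℝ → ℝ)
    (hL₁ : ∀ lam, L₁ lam =
      2 / (1 + 2 * lam) * (lam * B + c * Real.sqrt (lam ^ 2 + (1 + lam) ^ 2)))
    (lamStar : ℝ)
    (hlamStar : lamStar =
      (if B ≤ c then (-B + Real.sqrt (2 * c ^ 2 - B ^ 2)) / (2 * B) else 0)) :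
    0 ≤ lamStar ∧ ∀ lam, 0 ≤ lam → L₁ lamStar ≤ L₁ lam := by
  by_cases hBc : B ≤ c
  · -- case B ≤ c
    set s := Real.sqrt (2 * c ^ 2 - B ^ 2) with hsdef
    have hnn : (0:ℝ) ≤ 2 * c ^ 2 - B ^ 2 := by nlinarith
    have hs2 : s ^ 2 = 2 * c ^ 2 - B ^ 2 := Real.sq_sqrt hnn
    have hsnn : 0 ≤ s := Real.sqrt_nonneg _
    have hsB : B ≤ s := by nlinarith
    have hspos : 0 < s := lt_of_lt_of_le hB hsB
    have hls : lamStar = (s - B) / (2 * B) := by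
      rw [hlamStar, if_pos hBc]; ring
    have hlam0 : 0 ≤ lamStar := by
      rw [hls]; apply div_nonneg <;> linarith
    refine ⟨hlam0, fun lam hlam => ?_⟩
    -- value at lamStar
    have hin : lamStar ^ 2 + (1 + lamStar) ^ 2 = (c / B) ^ 2 := by
      rw [hls]; field_simp; nlinarith
    have hsq : Real.sqrt (lamStar ^ 2 + (1 + lamStar) ^ 2) = c / B := by
      rw [hin, Real.sqrt_sq (by positivity)]
    have hval : L₁ lamStar = B + s := by
      rw [hL₁, hsq, hls]
      have hB' : (B:ℝ) ≠ 0 := ne_of_gt hB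
      have hs' : (s:ℝ) ≠ 0 := ne_of_gt hspos
      have h1 : 1 + 2 * ((s - B) / (2 * B)) = s / B := by field_simp; ring
      rw [h1]
      field_simp
      nlinarith
    rw [hval, hL₁]
    -- general lower bound
    set r := Real.sqrt (lam ^ 2 + (1 + lam) ^ 2) with hrdef
    have hr2 : r ^ 2 = lam ^ 2 + (1 + lam) ^ 2 := Real.sq_sqrt (by positivity)
    have hrnn : 0 ≤ r := Real.sqrt_nonneg _
    have hden : (0:ℝ) < 1 + 2 * lam := by linarith
    rw [div_mul_eq_mul_div, le_div_iff₀ hden]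
    -- key: B + s*(1+2lam) ≤ 2*c*r
    have hkey : B + s * (1 + 2 * lam) ≤ 2 * c * r := by
      have hsq2 : (B + s * (1 + 2 * lam)) ^ 2 ≤ (2 * c * r) ^ 2 := by
        nlinarith [sq_nonneg (B * (1 + 2 * lam) - s)]
      have hbnn : 0 ≤ 2 * c * r := by positivity
      exact le_of_pow_le_pow_left₀ (by norm_num) hbnn hsq2
    have hexp : (B + s) * (1 + 2 * lam) = 2 * lam * B + (B + s * (1 + 2 * lam)) := by
      ring
    linarith [hexp, hkey]
  · -- case B > c
    push_neg at hBc
    have hls : lamStar = 0 := by rw [hlamStar, if_neg (not_le.mpr hBc)]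
    refine ⟨le_of_eq hls.symm, fun lam hlam => ?_⟩
    have hval : L₁ lamStar = 2 * c := by
      rw [hL₁, hls]
      rw [show (0:ℝ) ^ 2 + (1 + 0) ^ 2 = 1 by norm_num, Real.sqrt_one]
      ring
    rw [hval, hL₁]
    set r := Real.sqrt (lam ^ 2 + (1 + lam) ^ 2) with hrdef
    have hr2 : r ^ 2 = lam ^ 2 + (1 + lam) ^ 2 := Real.sq_sqrt (by positivity)
    have hrnn : 0 ≤ r := Real.sqrt_nonneg _
    have hr1 : 1 + lam ≤ r := by
      have h0 : Real.sqrt ((1 + lam) ^ 2) ≤ r := by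
        rw [hrdef]
        exact Real.sqrt_le_sqrt (by nlinarith)
      rwa [Real.sqrt_sq (by linarith)] at h0
    have hden : (0:ℝ) < 1 + 2 * lam := by linarith
    rw [div_mul_eq_mul_div, le_div_iff₀ hden]
    have h1 : 2 * c * (1 + lam) ≤ 2 * c * r :=
      mul_le_mul_of_nonneg_left hr1 (by positivity)
    have h2 : 0 ≤ lam * (B - c) := mul_nonneg hlam (le_of_lt (sub_pos.mpr hBc))
    nlinarith
end

section
/- For fixed α ∈ (0,1) and B > 0 with B ≤ z_{1−α/2}, the minimal value of L₁(λ) = (2/(1+2λ))·[λB + z_{1−α/2}√(λ² + (1+λ)²)] over λ ≥ 0 equals B + √(2z²_{1−α/2} − B²), and when B > z_{1−α/2} the minimal value is 2z_{1−α/2}. -/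
open MeasureTheory

/-!
Substituting `u = 1 + 2λ ≥ 1` turns `L₁(λ)` into `B + (c √(2(1 + u²)) - B) / u`.
Write `c² = (B² + D²) / 2`, i.e. `D = √(2c² - B²)`. By Cauchy–Schwarz,
`B + D u ≤ √((B² + D²)(1 + u²)) = c √(2(1 + u²))`, so `L₁ ≥ B + D`, with equality at `u = D / B`;
this point is admissible (`u ≥ 1`) exactly when `B ≤ c`. When `c < B`, the bound
`√(2(1 + u²)) ≥ 1 + u` gives `L₁(λ) - 2c ≥ (u - 1)(B - c) / u ≥ 0`, with equality at `λ = 0`.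
-/

open Real

lemma add_mul_le_sqrt_mul (a b x y : ℝ) : a * x + b * y ≤ √((a ^ 2 + b ^ 2) * (x ^ 2 + y ^ 2)) :=
  (le_abs_self _).trans <| abs_le_sqrt <| by nlinarith [sq_nonneg (a * y - b * x)]

noncomputable def lossOne (B c lam : ℝ) : ℝ :=
  2 / (1 + 2 * lam) * (lam * B + c * √(lam ^ 2 + (1 + lam) ^ 2))

section

variable {B c lam : ℝ}

lemma lossOne_eq_add_div (hu : 0 < 1 + 2 * lam) :
    lossOne B c lam = B + (c * √(2 * (1 + (1 + 2 * lam) ^ 2)) - B) / (1 + 2 * lam) := by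
  have hsqrt : √(2 * (1 + (1 + 2 * lam) ^ 2)) = 2 * √(lam ^ 2 + (1 + lam) ^ 2) := by
    rw [show (2 : ℝ) = √(2 ^ 2) from (sqrt_sq zero_le_two).symm, ← sqrt_mul (by norm_num)]
    ring_nf
  rw [lossOne, hsqrt]
  field_simp
  ring

lemma add_sqrt_le_lossOne (hB2 : B ^ 2 ≤ 2 * c ^ 2) (hc : 0 ≤ c) (hlam : 0 ≤ lam) :
    B + √(2 * c ^ 2 - B ^ 2) ≤ lossOne B c lam := by
  set D := √(2 * c ^ 2 - B ^ 2)
  set u := 1 + 2 * lam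
  have hu : 0 < u := by positivity
  have hcauchy : B * 1 + D * u ≤ c * √(2 * (1 + u ^ 2)) := by
    have hD2 : D ^ 2 = 2 * c ^ 2 - B ^ 2 := sq_sqrt (by linarith)
    calc B * 1 + D * u ≤ √((B ^ 2 + D ^ 2) * (1 ^ 2 + u ^ 2)) := add_mul_le_sqrt_mul _ _ _ _
      _ = √(c ^ 2) * √(2 * (1 + u ^ 2)) := by
        rw [← sqrt_mul (sq_nonneg c), hD2]; ring_nf
      _ = c * √(2 * (1 + u ^ 2)) := by rw [sqrt_sq hc]
  rw [lossOne_eq_add_div hu, add_le_add_iff_left, le_div_iff₀ hu]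
  linarith

lemma lossOne_eq_add_sqrt (hB : 0 < B) (hc : 0 ≤ c) (hB2 : B ^ 2 < 2 * c ^ 2) :
    lossOne B c ((√(2 * c ^ 2 - B ^ 2) / B - 1) / 2) = B + √(2 * c ^ 2 - B ^ 2) := by
  set D := √(2 * c ^ 2 - B ^ 2)
  have hD2 : D ^ 2 = 2 * c ^ 2 - B ^ 2 := sq_sqrt (by linarith)
  have hD : 0 < D := sqrt_pos.2 (by linarith)
  have hu : 1 + 2 * ((D / B - 1) / 2) = D / B := by ring
  have hsqrt : √(2 * (1 + (D / B) ^ 2)) = 2 * c / B := by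
    rw [← sqrt_sq (by positivity : 0 ≤ 2 * c / B)]
    congr 1
    field_simp
    linear_combination hD2
  rw [lossOne_eq_add_div (by rw [hu]; positivity), hu, hsqrt]
  field_simp
  linear_combination -hD2

lemma two_mul_le_lossOne (hcB : c ≤ B) (hc : 0 ≤ c) (hlam : 0 ≤ lam) :
    2 * c ≤ lossOne B c lam := by
  set u := 1 + 2 * lam
  have hu : 1 ≤ u := by linarith
  have hsqrt : 1 + u ≤ √(2 * (1 + u ^ 2)) :=
    le_sqrt_of_sq_le (by nlinarith [sq_nonneg (u - 1)])
  rw [lossOne_eq_add_div (by linarith), ← sub_le_iff_le_add', le_div_iff₀ (by linarith)]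
  linarith [mul_le_mul_of_nonneg_left hsqrt hc, mul_nonneg (sub_nonneg.2 hu) (sub_nonneg.2 hcB)]

lemma lossOne_zero : lossOne B c 0 = 2 * c := by
  simp [lossOne]

end

theorem stmt_9_general (B c : ℝ) (hB : 0 < B)
    (hcpos : 0 < c)
    (L₁ : ℝ → ℝ)
    (hL₁ : ∀ lam, L₁ lam =
      2 / (1 + 2 * lam) * (lam * B + c * Real.sqrt (lam ^ 2 + (1 + lam) ^ 2))) :
    (B ≤ c → IsLeast (L₁ '' Set.Ici 0) (B + Real.sqrt (2 * c ^ 2 - B ^ 2))) ∧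
    (c < B → IsLeast (L₁ '' Set.Ici 0) (2 * c)) := by
  obtain rfl : L₁ = lossOne B c := funext hL₁
  refine ⟨fun hBc => ⟨⟨_, ?_, lossOne_eq_add_sqrt hB hcpos.le (by nlinarith)⟩, ?_⟩,
    fun hcB => ⟨⟨0, Set.self_mem_Ici, lossOne_zero⟩, ?_⟩⟩
  · have hBD : B ≤ √(2 * c ^ 2 - B ^ 2) := le_sqrt_of_sq_le (by nlinarith)
    have : 1 ≤ √(2 * c ^ 2 - B ^ 2) / B := (one_le_div hB).2 hBD
    simp only [Set.mem_Ici]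
    linarith
  · rintro _ ⟨lam, hlam, rfl⟩
    exact add_sqrt_le_lossOne (by nlinarith) hcpos.le hlam
  · rintro _ ⟨lam, hlam, rfl⟩
    exact two_mul_le_lossOne hcB.le hcpos.le hlam

/-- The minimal value of L₁ over λ ≥ 0 is B + √(2c² − B²) when B ≤ c, and 2c when
B > c, where c = z_{1−α/2}. -/
theorem stmt_9 (α B c : ℝ) (hα : 0 < α) (hα1 : α < 1) (hB : 0 < B)
    (hc : stdNormalCDF c = 1 - α / 2) (hcpos : 0 < c)
    (L₁ : ℝ → ℝ)
    (hL₁ : ∀ lam, L₁ lam =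
      2 / (1 + 2 * lam) * (lam * B + c * Real.sqrt (lam ^ 2 + (1 + lam) ^ 2))) :
    (B ≤ c → IsLeast (L₁ '' Set.Ici 0) (B + Real.sqrt (2 * c ^ 2 - B ^ 2))) ∧
    (c < B → IsLeast (L₁ '' Set.Ici 0) (2 * c)) :=
  stmt_9_general B c hB hcpos L₁ hL₁
end

section
/- For any α ∈ (0,1), the function h(μ) defined implicitly for μ ≥ 0 by Φ(h(μ) − μ) − Φ(−h(μ) − μ) = α with h(μ) > 0 is strictly increasing in μ on (0, ∞). -/
/-!
Write `F μ x = Φ(x - μ) - Φ(-x - μ)`, so that `h μ` solves `F μ (h μ) = α`. In `x`, `F μ` is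
strictly increasing, with derivative `φ(x - μ) + φ(x + μ) > 0`. In `μ ≥ 0`, for fixed `x > 0`,
`F · x` is strictly decreasing, with derivative `φ(x + μ) - φ(x - μ) < 0` since
`|x - μ| < x + μ`. Hence for `0 < a < b`, `F a (h b) > F b (h b) = α = F a (h a)`, which forces
`h b > h a`.
-/

open MeasureTheory

noncomputable def stdNormalPDF (t : ℝ) : ℝ := (Real.sqrt (2 * Real.pi))⁻¹ * Real.exp (-t ^ 2 / 2)

lemma stdNormalPDF_pos (t : ℝ) : 0 < stdNormalPDF t := by
  unfold stdNormalPDF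
  positivity

lemma stdNormalPDF_neg (t : ℝ) : stdNormalPDF (-t) = stdNormalPDF t := by
  simp only [stdNormalPDF, neg_sq]

lemma stdNormalPDF_lt_of_sq_lt {s t : ℝ} (h : s ^ 2 < t ^ 2) : stdNormalPDF t < stdNormalPDF s := by
  unfold stdNormalPDF
  gcongr

lemma continuous_stdNormalPDF : Continuous stdNormalPDF := by
  unfold stdNormalPDF
  fun_prop

lemma integrable_stdNormalPDF : Integrable stdNormalPDF := by
  have h := (integrable_exp_neg_mul_sq (b := 1 / 2) (by norm_num)).const_mul
    (Real.sqrt (2 * Real.pi))⁻¹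
  convert h using 3 with t
  simp only [stdNormalPDF]
  ring_nf

lemma hasDerivAt_stdNormalCDF (x : ℝ) : HasDerivAt stdNormalCDF (stdNormalPDF x) x := by
  have hCDF : ∀ y, stdNormalCDF y = stdNormalCDF 0 + ∫ t in (0 : ℝ)..y, stdNormalPDF t := fun y ↦ by
    rw [← intervalIntegral.integral_Iic_sub_Iic integrable_stdNormalPDF.integrableOn
      integrable_stdNormalPDF.integrableOn]
    simp only [stdNormalCDF, stdNormalPDF]
    ring
  rw [show stdNormalCDF = _ from funext hCDF]
  exact (intervalIntegral.integral_hasDerivAt_right integrable_stdNormalPDF.intervalIntegrable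
    (continuous_stdNormalPDF.stronglyMeasurableAtFilter _ _)
    continuous_stdNormalPDF.continuousAt).const_add _

/-- The CDF of the folded normal variable `|Z + μ|`, `Z` standard normal. -/
noncomputable def foldedNormalCDF (μ x : ℝ) : ℝ := stdNormalCDF (x - μ) - stdNormalCDF (-x - μ)

lemma strictMono_foldedNormalCDF (μ : ℝ) : StrictMono (foldedNormalCDF μ) := by
  refine strictMono_of_hasDerivAt_pos (f' := fun x ↦ stdNormalPDF (x - μ) + stdNormalPDF (-x - μ))
    (fun x ↦ ?_) fun x ↦ add_pos (stdNormalPDF_pos _) (stdNormalPDF_pos _)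
  have hright := (hasDerivAt_stdNormalCDF (x - μ)).comp x ((hasDerivAt_id x).sub_const μ)
  have hleft := (hasDerivAt_stdNormalCDF (-x - μ)).comp x ((hasDerivAt_id x).neg.sub_const μ)
  exact (hright.sub hleft).congr_deriv (by ring)

lemma strictAntiOn_foldedNormalCDF {x : ℝ} (hx : 0 < x) :
    StrictAntiOn (fun μ ↦ foldedNormalCDF μ x) (Set.Ici 0) := by
  have hderiv : ∀ μ, HasDerivAt (fun μ ↦ foldedNormalCDF μ x)
      (stdNormalPDF (x + μ) - stdNormalPDF (x - μ)) μ := fun μ ↦ by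
    have hright := (hasDerivAt_stdNormalCDF (x - μ)).comp μ ((hasDerivAt_id μ).const_sub x)
    have hleft := (hasDerivAt_stdNormalCDF (-x - μ)).comp μ ((hasDerivAt_id μ).const_sub (-x))
    rw [show -x - μ = -(x + μ) by ring, stdNormalPDF_neg] at hleft
    exact (hright.sub hleft).congr_deriv (by ring)
  refine strictAntiOn_of_hasDerivWithinAt_neg (convex_Ici 0)
    (fun μ _ ↦ (hderiv μ).continuousAt.continuousWithinAt)
    (fun μ _ ↦ (hderiv μ).hasDerivWithinAt) fun μ hμ ↦ ?_
  rw [interior_Ici, Set.mem_Ioi] at hμ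
  exact sub_neg.mpr (stdNormalPDF_lt_of_sq_lt (by nlinarith))

theorem stmt_10_general (α : ℝ)
    (h : ℝ → ℝ)
    (hpos : ∀ μ, 0 ≤ μ → 0 < h μ)
    (himp : ∀ μ, 0 ≤ μ → stdNormalCDF (h μ - μ) - stdNormalCDF (-h μ - μ) = α) :
    StrictMonoOn h (Set.Ioi 0) := by
  intro a ha b hb hab
  rw [Set.mem_Ioi] at ha hb
  by_contra! hle
  have hα_a : foldedNormalCDF a (h a) = α := himp a ha.le
  have hα_b : foldedNormalCDF b (h b) = α := himp b hb.le
  have hdecr : foldedNormalCDF b (h b) < foldedNormalCDF a (h b) :=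
    strictAntiOn_foldedNormalCDF (hpos b hb.le) (Set.mem_Ici.mpr ha.le) (Set.mem_Ici.mpr hb.le) hab
  have hincr : foldedNormalCDF a (h b) ≤ foldedNormalCDF a (h a) :=
    (strictMono_foldedNormalCDF a).monotone hle
  linarith

/-- The function h(μ) defined implicitly by Φ(h(μ) − μ) − Φ(−h(μ) − μ) = α with
h(μ) > 0 is strictly increasing on (0, ∞). -/
theorem stmt_10 (α : ℝ) (hα : 0 < α) (hα1 : α < 1)
    (h : ℝ → ℝ)
    (hpos : ∀ μ, 0 ≤ μ → 0 < h μ)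
    (himp : ∀ μ, 0 ≤ μ → stdNormalCDF (h μ - μ) - stdNormalCDF (-h μ - μ) = α) :
    StrictMonoOn h (Set.Ioi 0) :=
  stmt_10_general α h hpos himp
end

section
/- For any α ∈ (0,1) and γ ≥ 0, √(Q_α(γ)) − z_α ≤ √γ, where Q_α(γ) is the αth quantile of the noncentral chi-square distribution with 1 degree of freedom and noncentrality parameter γ and z_α² = Q_α(0); moreover the inequality is strict for γ > 0. -/
open MeasureTheory

/-- Lemma 1: for any α ∈ (0,1), √(Q_α(γ)) − z_α ≤ √γ for γ ≥ 0, with strict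
inequality for γ > 0.  Here Q_α(γ) is the αth quantile of χ²(1, γ) and
z_α = √(Q_α(0)). -/
theorem stmt_11 (α : ℝ) (hα : 0 < α) (hα1 : α < 1)
    (Q : ℝ → ℝ) (hQnonneg : ∀ γ, 0 ≤ γ → 0 < Q γ)
    (hQ : ∀ γ, 0 ≤ γ →
      stdNormalCDF (Real.sqrt (Q γ) - Real.sqrt γ) -
        stdNormalCDF (-Real.sqrt (Q γ) - Real.sqrt γ) = α) :
    ∀ γ, 0 ≤ γ →
      Real.sqrt (Q γ) - Real.sqrt (Q 0) ≤ Real.sqrt γ ∧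
      (0 < γ → Real.sqrt (Q γ) - Real.sqrt (Q 0) < Real.sqrt γ) := by
  intro γ hγ
  set h := Real.sqrt (Q γ) with hh
  set z := Real.sqrt (Q 0) with hz
  set s := Real.sqrt γ with hs
  have hs0 : 0 ≤ s := Real.sqrt_nonneg _
  have hz0 : 0 < z := Real.sqrt_pos.mpr (hQnonneg 0 le_rfl)
  have hpos : 0 < h := Real.sqrt_pos.mpr (hQnonneg γ hγ)
  have e1 : stdNormalCDF (h - s) - stdNormalCDF (-h - s) = α := hQ γ hγ
  have e0 : stdNormalCDF z - stdNormalCDF (-z) = α := by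
    have := hQ 0 le_rfl
    simpa [Real.sqrt_zero] using this
  have M := stdNormalCDF_strictMono
  have hle : h - z ≤ s := by
    by_contra hc
    push_neg at hc
    have h1 : z < h - s := by linarith
    have h2 : -h - s < -z := by linarith
    have := M h1
    have := M h2
    linarith
  refine ⟨hle, fun hγpos => ?_⟩
  have hspos : 0 < s := Real.sqrt_pos.mpr hγpos
  by_contra hc
  push_neg at hc
  have heq : h - s = z := by linarith
  have h2 : -h - s < -z := by linarith
  have := M h2
  rw [heq] at e1
  linarith
end

section
/- For any α ∈ (0,1) and B > 0, the function L₂(λ) = (2/(1+2λ))·√(Q_{1−α}(g(λ,B))·(λ² + (1+λ)²)), with g(λ,B) = λ²B²/(λ² + (1+λ)²), attains its minimum over λ ∈ [0,∞) at some λ ∈ (0, ∞); in particular its right derivative at λ = 0 equals −2√(Q_{1−α}(0)) < 0 and L₂ is eventually increasing. -/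
open MeasureTheory

/-!
The derivative of `L₂(λ) = 2 / (1 + 2λ) · √(Q(g λ) (λ² + (1 + λ)²))` has the sign of
`(1 + 2λ) Q'(g λ) g'(λ) (λ² + (1 + λ)²) - 2 Q(g λ)`. At `λ = 0` we have `g'(0) = 0`, so this is
`-2 Q(0) < 0`. As `λ → ∞` the first term grows linearly, because `g` maps `[0, ∞)` into
`[0, B² / 2]`, where `Q'` is bounded below by a positive constant and `Q` is bounded above. Hence
`L₂` decreases at `0` and increases eventually, so its minimum over `[0, ∞)` exists and is not
attained at `0`.
-/

open Set Filter Topology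

theorem exists_gt_isMinOn_Ici_of_hasDerivWithinAt_neg {f : ℝ → ℝ} {a f' Λ : ℝ}
    (hf : ContinuousOn f (Ici a)) (hfa : HasDerivWithinAt f f' (Ici a) a) (hf' : f' < 0)
    (hmono : MonotoneOn f (Ici Λ)) : ∃ x, a < x ∧ IsMinOn f (Ici a) x := by
  have hfar : ∀ᶠ x in cocompact ℝ ⊓ 𝓟 (Ici a), f (max a Λ) ≤ f x := by
    filter_upwards [mem_inf_of_left (isCompact_Icc (a := a) (b := max a Λ)).compl_mem_cocompact,
      mem_inf_of_right (mem_principal_self _)] with x hxK hxa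
    have hx : max a Λ ≤ x := by
      by_contra! h
      exact hxK ⟨hxa, h.le⟩
    exact hmono (le_max_right a Λ) ((le_max_right a Λ).trans hx) hx
  obtain ⟨x, hxa, hmin⟩ := hf.exists_isMinOn' isClosed_Ici (le_max_left a Λ) hfar
  refine ⟨x, lt_of_le_of_ne hxa fun hax => hf'.not_ge ?_, hmin⟩
  subst hax
  have hcone : (1 : ℝ) ∈ posTangentConeAt (Ici a) a :=
    mem_posTangentConeAt_of_segment_subset <|
      (convex_Ici a).segment_subset (mem_Ici.2 le_rfl) (by simp)
  simpa using hmin.localize.hasFDerivWithinAt_nonneg hfa.hasFDerivWithinAt hcone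

noncomputable def noncentrality (B l : ℝ) : ℝ := l ^ 2 * B ^ 2 / (l ^ 2 + (1 + l) ^ 2)

noncomputable def lengthL₂ (Q : ℝ → ℝ) (B l : ℝ) : ℝ :=
  2 / (1 + 2 * l) * Real.sqrt (Q (noncentrality B l) * (l ^ 2 + (1 + l) ^ 2))

noncomputable def lengthL₂Deriv (Q Q' : ℝ → ℝ) (B l : ℝ) : ℝ :=
  ((1 + 2 * l) * Q' (noncentrality B l) * (B ^ 2 * (2 * l ^ 2 + 2 * l) / (l ^ 2 + (1 + l) ^ 2))
      - 2 * Q (noncentrality B l)) /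
    ((1 + 2 * l) ^ 2 * √(Q (noncentrality B l) * (l ^ 2 + (1 + l) ^ 2)))

theorem sq_add_one_add_sq_pos (l : ℝ) : 0 < l ^ 2 + (1 + l) ^ 2 := by
  nlinarith [sq_nonneg (2 * l + 1)]

theorem noncentrality_nonneg (B l : ℝ) : 0 ≤ noncentrality B l := by
  unfold noncentrality; positivity

theorem noncentrality_le {B l : ℝ} (hl : 0 ≤ l) : noncentrality B l ≤ B ^ 2 / 2 := by
  rw [noncentrality, div_le_div_iff₀ (sq_add_one_add_sq_pos l) two_pos]
  nlinarith [sq_nonneg B]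

theorem noncentrality_mem_Icc {B l : ℝ} (hl : 0 ≤ l) : noncentrality B l ∈ Icc 0 (B ^ 2 / 2) :=
  ⟨noncentrality_nonneg B l, noncentrality_le hl⟩

theorem hasDerivAt_sq_add_one_add_sq (l : ℝ) :
    HasDerivAt (fun x : ℝ => x ^ 2 + (1 + x) ^ 2) (2 * (1 + 2 * l)) l :=
  ((hasDerivAt_pow 2 l).add ((hasDerivAt_id l).const_add 1 |>.fun_pow 2)).congr_deriv
    (by simp; ring)

theorem hasDerivAt_noncentrality (B l : ℝ) :
    HasDerivAt (noncentrality B)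
      (B ^ 2 * (2 * l ^ 2 + 2 * l) / (l ^ 2 + (1 + l) ^ 2) ^ 2) l := by
  have hnum : HasDerivAt (fun x : ℝ => x ^ 2 * B ^ 2) (2 * l * B ^ 2) l := by
    simpa using (hasDerivAt_pow 2 l).mul_const (B ^ 2)
  have hD := (sq_add_one_add_sq_pos l).ne'
  exact (hnum.div (hasDerivAt_sq_add_one_add_sq l) hD).congr_deriv (by field_simp; ring)

theorem hasDerivAt_lengthL₂ {Q Q' : ℝ → ℝ} {B l : ℝ} (hu : 0 < 1 + 2 * l)
    (hQ : HasDerivAt Q (Q' (noncentrality B l)) (noncentrality B l))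
    (hQpos : 0 < Q (noncentrality B l)) :
    HasDerivAt (lengthL₂ Q B) (lengthL₂Deriv Q Q' B l) l := by
  have hD := sq_add_one_add_sq_pos l
  have hF : 0 < Q (noncentrality B l) * (l ^ 2 + (1 + l) ^ 2) := mul_pos hQpos hD
  have h := ((hasDerivAt_const l (2 : ℝ)).div (((hasDerivAt_id l).const_mul 2).const_add 1)
    hu.ne').mul (((hQ.comp l (hasDerivAt_noncentrality B l)).mul
      (hasDerivAt_sq_add_one_add_sq l)).sqrt hF.ne')
  refine h.congr_deriv ?_
  simp only [Pi.mul_apply, Pi.div_apply, Function.comp_apply, id, lengthL₂Deriv]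
  have hs := Real.sq_sqrt hF.le
  have hspos := Real.sqrt_pos.2 hF
  set s := √(Q (noncentrality B l) * (l ^ 2 + (1 + l) ^ 2))
  field_simp
  rw [hs]
  ring

theorem lengthL₂Deriv_zero (Q Q' : ℝ → ℝ) (B : ℝ) : lengthL₂Deriv Q Q' B 0 = -2 * √(Q 0) := by
  simp [lengthL₂Deriv, noncentrality, neg_div, mul_div_assoc, Real.div_sqrt]

section

variable {Q Q' : ℝ → ℝ} {B : ℝ}

theorem hasDerivAt_lengthL₂_of_nonneg (hQ : ∀ γ ∈ Icc 0 (B ^ 2 / 2), HasDerivAt Q (Q' γ) γ)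
    (hQpos : ∀ γ ∈ Icc 0 (B ^ 2 / 2), 0 < Q γ) {l : ℝ} (hl : 0 ≤ l) :
    HasDerivAt (lengthL₂ Q B) (lengthL₂Deriv Q Q' B l) l :=
  hasDerivAt_lengthL₂ (by linarith) (hQ _ (noncentrality_mem_Icc hl))
    (hQpos _ (noncentrality_mem_Icc hl))

theorem continuousOn_lengthL₂ (hQ : ∀ γ ∈ Icc 0 (B ^ 2 / 2), HasDerivAt Q (Q' γ) γ)
    (hQpos : ∀ γ ∈ Icc 0 (B ^ 2 / 2), 0 < Q γ) : ContinuousOn (lengthL₂ Q B) (Ici 0) :=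
  fun _ hl => (hasDerivAt_lengthL₂_of_nonneg hQ hQpos hl).continuousAt.continuousWithinAt

theorem eventually_lengthL₂Deriv_pos (hB : B ≠ 0) (hQ : ContinuousOn Q (Icc 0 (B ^ 2 / 2)))
    (hQpos : ∀ γ ∈ Icc 0 (B ^ 2 / 2), 0 < Q γ) (hQ' : ContinuousOn Q' (Icc 0 (B ^ 2 / 2)))
    (hQ'pos : ∀ γ ∈ Icc 0 (B ^ 2 / 2), 0 < Q' γ) :
    ∀ᶠ l in atTop, 0 < lengthL₂Deriv Q Q' B l := by
  obtain ⟨M, hM⟩ := isCompact_Icc.bddAbove_image hQ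
  obtain ⟨m, hm, hmQ'⟩ := isCompact_Icc.exists_forall_le' hQ' hQ'pos
  have hB2 : 0 < B ^ 2 := by positivity
  filter_upwards [eventually_ge_atTop 0, eventually_gt_atTop (2 * M / (m * B ^ 2))]
    with l hl hlM
  rw [div_lt_iff₀ (by positivity)] at hlM
  have hγ := noncentrality_mem_Icc (B := B) hl
  have hD := sq_add_one_add_sq_pos l
  have hpoly : l * (l ^ 2 + (1 + l) ^ 2) ≤ (1 + 2 * l) * (2 * l ^ 2 + 2 * l) := by
    nlinarith [sq_nonneg l, mul_nonneg hl (sq_nonneg l)]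
  have hgrowth : m * B ^ 2 * l ≤ (1 + 2 * l) * Q' (noncentrality B l) *
      (B ^ 2 * (2 * l ^ 2 + 2 * l) / (l ^ 2 + (1 + l) ^ 2)) := by
    rw [mul_div_assoc', le_div_iff₀ hD]
    have hDl : 0 ≤ B ^ 2 * l * (l ^ 2 + (1 + l) ^ 2) := by positivity
    nlinarith [mul_le_mul_of_nonneg_right (hmQ' _ hγ) hDl,
      mul_le_mul_of_nonneg_left hpoly (mul_nonneg (hQ'pos _ hγ).le hB2.le)]
  have hQM : Q (noncentrality B l) ≤ M := hM ⟨_, hγ, rfl⟩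
  exact div_pos (by linarith)
    (mul_pos (by positivity) (Real.sqrt_pos.2 (mul_pos (hQpos _ hγ) hD)))

theorem exists_monotoneOn_Ici_lengthL₂ (hB : B ≠ 0)
    (hQ : ∀ γ ∈ Icc 0 (B ^ 2 / 2), HasDerivAt Q (Q' γ) γ)
    (hQpos : ∀ γ ∈ Icc 0 (B ^ 2 / 2), 0 < Q γ) (hQ' : ContinuousOn Q' (Icc 0 (B ^ 2 / 2)))
    (hQ'pos : ∀ γ ∈ Icc 0 (B ^ 2 / 2), 0 < Q' γ) :
    ∃ Λ, 0 ≤ Λ ∧ MonotoneOn (lengthL₂ Q B) (Ici Λ) := by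
  obtain ⟨Λ, hΛ⟩ := eventually_atTop.1 <| eventually_lengthL₂Deriv_pos hB
    (fun γ hγ => (hQ γ hγ).continuousAt.continuousWithinAt) hQpos hQ' hQ'pos
  refine ⟨max 0 Λ, le_max_left 0 Λ, StrictMonoOn.monotoneOn ?_⟩
  refine strictMonoOn_of_hasDerivWithinAt_pos (f' := lengthL₂Deriv Q Q' B) (convex_Ici _)
    ((continuousOn_lengthL₂ hQ hQpos).mono (Ici_subset_Ici.2 (le_max_left 0 Λ)))
    (fun x hx => ?_) fun x hx => ?_ <;> rw [interior_Ici, mem_Ioi, max_lt_iff] at hx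
  · exact (hasDerivAt_lengthL₂_of_nonneg hQ hQpos hx.1.le).hasDerivWithinAt
  · exact hΛ x hx.2.le

end

theorem stmt_14_general (B : ℝ) (hB : 0 < B)
    (Q Q' : ℝ → ℝ)
    (hQpos : ∀ γ, 0 ≤ γ → 0 < Q γ)
    (hQderiv : ∀ γ, 0 ≤ γ → HasDerivAt Q (Q' γ) γ)
    (hQ'pos : ∀ γ, 0 ≤ γ → 0 < Q' γ)
    (hQ'cont : ContinuousOn Q' (Set.Ici 0))
    (g : ℝ → ℝ) (hg : ∀ lam, g lam = lam ^ 2 * B ^ 2 / (lam ^ 2 + (1 + lam) ^ 2))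
    (L₂ : ℝ → ℝ)
    (hL₂ : ∀ lam, L₂ lam =
      2 / (1 + 2 * lam) * Real.sqrt (Q (g lam) * (lam ^ 2 + (1 + lam) ^ 2))) :
    (∃ lam : ℝ, 0 < lam ∧ ∀ μ, 0 ≤ μ → L₂ lam ≤ L₂ μ) ∧
    (HasDerivWithinAt L₂ (-2 * Real.sqrt (Q 0)) (Set.Ici 0) 0 ∧
      -2 * Real.sqrt (Q 0) < 0) ∧
    (∃ Λ : ℝ, 0 ≤ Λ ∧ MonotoneOn L₂ (Set.Ici Λ)) := by
  obtain rfl : g = noncentrality B := funext hg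
  obtain rfl : L₂ = lengthL₂ Q B := funext hL₂
  have hQ : ∀ γ ∈ Icc 0 (B ^ 2 / 2), HasDerivAt Q (Q' γ) γ := fun γ hγ => hQderiv γ hγ.1
  have hQpos' : ∀ γ ∈ Icc 0 (B ^ 2 / 2), 0 < Q γ := fun γ hγ => hQpos γ hγ.1
  have hderiv : HasDerivAt (lengthL₂ Q B) (-2 * √(Q 0)) 0 :=
    lengthL₂Deriv_zero Q Q' B ▸ hasDerivAt_lengthL₂_of_nonneg hQ hQpos' le_rfl
  have hneg : -2 * √(Q 0) < 0 := by
    have := Real.sqrt_pos.2 (hQpos 0 le_rfl)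
    linarith
  obtain ⟨Λ, hΛ, hmono⟩ := exists_monotoneOn_Ici_lengthL₂ hB.ne' hQ hQpos'
    (hQ'cont.mono fun γ hγ => hγ.1) fun γ hγ => hQ'pos γ hγ.1
  obtain ⟨lam, hlam, hmin⟩ := exists_gt_isMinOn_Ici_of_hasDerivWithinAt_neg
    (continuousOn_lengthL₂ hQ hQpos') hderiv.hasDerivWithinAt hneg hmono
  exact ⟨⟨lam, hlam, fun μ hμ => hmin hμ⟩, ⟨hderiv.hasDerivWithinAt, hneg⟩, Λ, hΛ, hmono⟩

/-- Proposition 1: L₂(λ; α, B) attains its minimum over λ ∈ [0,∞) at some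
λ ∈ (0, ∞); moreover its right derivative at λ = 0 equals −2√(Q(0)) < 0 and L₂ is
eventually increasing.  Here Q = Q_{1−α} is the (1−α)th noncentral χ²(1, ·)
quantile, assumed continuously differentiable, strictly positive, with strictly
positive derivative on [0, ∞). -/
theorem stmt_14 (α B : ℝ) (hα : 0 < α) (hα1 : α < 1) (hB : 0 < B)
    (Q Q' : ℝ → ℝ)
    (hQquant : ∀ γ, 0 ≤ γ →
      stdNormalCDF (Real.sqrt (Q γ) - Real.sqrt γ) -
        stdNormalCDF (-Real.sqrt (Q γ) - Real.sqrt γ) = 1 - α)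
    (hQpos : ∀ γ, 0 ≤ γ → 0 < Q γ)
    (hQderiv : ∀ γ, 0 ≤ γ → HasDerivAt Q (Q' γ) γ)
    (hQ'pos : ∀ γ, 0 ≤ γ → 0 < Q' γ)
    (hQ'cont : ContinuousOn Q' (Set.Ici 0))
    (g : ℝ → ℝ) (hg : ∀ lam, g lam = lam ^ 2 * B ^ 2 / (lam ^ 2 + (1 + lam) ^ 2))
    (L₂ : ℝ → ℝ)
    (hL₂ : ∀ lam, L₂ lam =
      2 / (1 + 2 * lam) * Real.sqrt (Q (g lam) * (lam ^ 2 + (1 + lam) ^ 2))) :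
    (∃ lam : ℝ, 0 < lam ∧ ∀ μ, 0 ≤ μ → L₂ lam ≤ L₂ μ) ∧
    (HasDerivWithinAt L₂ (-2 * Real.sqrt (Q 0)) (Set.Ici 0) 0 ∧
      -2 * Real.sqrt (Q 0) < 0) ∧
    (∃ Λ : ℝ, 0 ≤ Λ ∧ MonotoneOn L₂ (Set.Ici Λ)) :=
  stmt_14_general B hB Q Q' hQpos hQderiv hQ'pos hQ'cont g hg L₂ hL₂
end
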